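/- If λ > κ is a measurable cardinal and κ is <λ-supercompact (that is, κ is μ-supercompact for every cardinal μ with κ ≤ μ < λ), then κ is λ-supercompact. -/

import Mathlib

open Cardinal Ordinal Set

/-- The order type of a set of elements of `o.ToType` (a set of ordinals below `o`). -/
noncomputable def otp {o : Ordinal.{0}} (s : Set o.ToType) : Ordinal.{0} :=
  @Ordinal.type s (· < ·) isWellOrder_lt

/-- The ordinal below `o` corresponding to an element of `o.ToType`. -/
noncomputable def ordOf {o : Ordinal.{0}} (x : o.ToType) : Ordinal.{0} :=
  @Ordinal.typein o.ToType (· < ·) isWellOrder_lt x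

/-- `P_κ(λ)`: the collection of subsets of `λ` of cardinality less than `κ`. -/
def Pfam (κ : Cardinal.{0}) (lam : Ordinal.{0}) : Set (Set lam.ToType) :=
  {s | #s < κ}

/-- An ultrafilter on a type is `κ`-complete if it is closed under
intersections of families of fewer than `κ` sets. -/
def IsKComplete {X : Type} (κ : Cardinal.{0}) (U : Ultrafilter X) : Prop :=
  ∀ (ι : Type) (A : ι → Set X), #ι < κ → (∀ i, A i ∈ U) → (⋂ i, A i) ∈ U

/-- An ultrafilter on `P_κ(λ)` is fine if for every `α < λ` the collection of
`s` with `α ∈ s` is in the ultrafilter. -/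
def IsFineUF (κ : Cardinal.{0}) (lam : Ordinal.{0}) (U : Ultrafilter (Pfam κ lam)) : Prop :=
  ∀ x : lam.ToType, {s : Pfam κ lam | x ∈ (s : Set lam.ToType)} ∈ U

/-- An ultrafilter on `P_κ(λ)` is normal if every choice function on a set in
the ultrafilter is constant on a set in the ultrafilter. -/
def IsNormalUF (κ : Cardinal.{0}) (lam : Ordinal.{0}) (U : Ultrafilter (Pfam κ lam)) : Prop :=
  ∀ f : Set lam.ToType → lam.ToType,
    {s : Pfam κ lam | f s ∈ (s : Set lam.ToType)} ∈ U →
    ∃ x : lam.ToType, {s : Pfam κ lam | f s = x} ∈ U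

/-- `κ` is `λ`-supercompact: there is a `κ`-complete fine normal ultrafilter
on `P_κ(λ)`. -/
def IsSupercompact (κ : Cardinal.{0}) (lam : Ordinal.{0}) : Prop :=
  ∃ U : Ultrafilter (Pfam κ lam), IsKComplete κ U ∧ IsFineUF κ lam U ∧ IsNormalUF κ lam U

/-- An uncountable cardinal is measurable if it carries a `κ`-complete
nonprincipal ultrafilter. -/
def IsMeasurableCard (κ : Cardinal.{0}) : Prop :=
  ℵ₀ < κ ∧ ∃ U : Ultrafilter κ.ord.ToType,
    IsKComplete κ U ∧ ∀ x : κ.ord.ToType, ({x} : Set κ.ord.ToType) ∉ U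

/-- `κ` is a high-jump cardinal: for some cardinal `θ ≥ κ` there is a
`κ`-complete fine normal ultrafilter `U` on `P_κ(θ)` such that for every
`f : κ → κ` the set `{s ∈ P_κ(θ) : f (otp (s ∩ κ)) < otp s}` belongs to `U`. -/
def IsHighJump (κ : Cardinal.{0}) : Prop :=
  ∃ θ : Cardinal.{0}, κ ≤ θ ∧ ∃ U : Ultrafilter (Pfam κ θ.ord),
    IsKComplete κ U ∧ IsFineUF κ θ.ord U ∧ IsNormalUF κ θ.ord U ∧
    ∀ f : Ordinal.{0} → Ordinal.{0}, (∀ α < κ.ord, f α < κ.ord) →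
      {s : Pfam κ θ.ord |
        f (otp {x : θ.ord.ToType | x ∈ (s : Set θ.ord.ToType) ∧ ordOf x < κ.ord}) <
          otp (s : Set θ.ord.ToType)} ∈ U

theorem push_master {κ : Cardinal.{0}} {o₁ o₂ : Ordinal.{0}} (j : o₁.ToType → o₂.ToType)
    (hj : Function.Injective j) (U : Ultrafilter (Pfam κ o₁))
    (hUc : IsKComplete κ U) (hUf : IsFineUF κ o₁ U) (hUn : IsNormalUF κ o₁ U) :
    ∃ V : Ultrafilter (Pfam κ o₂), IsKComplete κ V ∧
      {s : Pfam κ o₂ | (s : Set o₂.ToType) ⊆ Set.range j} ∈ V ∧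
      (∀ b ∈ Set.range j, {s : Pfam κ o₂ | b ∈ (s : Set o₂.ToType)} ∈ V) ∧
      IsNormalUF κ o₂ V := by
  classical
  have hpush : ∀ s : Pfam κ o₁, j '' (s : Set o₁.ToType) ∈ Pfam κ o₂ := by
    intro s
    show #(j '' (s : Set o₁.ToType)) < κ
    rw [Cardinal.mk_image_eq hj]
    exact s.2
  set push : Pfam κ o₁ → Pfam κ o₂ := fun s => ⟨j '' (s : Set o₁.ToType), hpush s⟩ with hpushdef
  refine ⟨U.map push, ?_, ?_, ?_, ?_⟩
  · intro ι A hι hA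
    rw [Ultrafilter.mem_map, Set.preimage_iInter]
    exact hUc ι _ hι fun i => Ultrafilter.mem_map.1 (hA i)
  · rw [Ultrafilter.mem_map]
    exact Filter.univ_mem' fun t => Set.image_subset_range j _
  · rintro b ⟨a, rfl⟩
    rw [Ultrafilter.mem_map]
    refine Filter.mem_of_superset (hUf a) ?_
    intro t ht
    exact Set.mem_image_of_mem j ht
  · intro F hF
    rw [Ultrafilter.mem_map] at hF
    obtain ⟨t₀, ht₀⟩ := Ultrafilter.nonempty_of_mem hF
    have ht₀' : F (j '' (t₀ : Set o₁.ToType)) ∈ j '' (t₀ : Set o₁.ToType) := ht₀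
    obtain ⟨a₀, -, -⟩ := ht₀'
    set g : Set o₁.ToType → o₁.ToType := fun s =>
      if h : ∃ a, j a = F (j '' s) then h.choose else a₀ with hgdef
    have hgin : {t : Pfam κ o₁ | g (t : Set o₁.ToType) ∈ (t : Set o₁.ToType)} ∈ U := by
      refine Filter.mem_of_superset hF ?_
      intro t ht
      have ht' : F (j '' (t : Set o₁.ToType)) ∈ j '' (t : Set o₁.ToType) := ht
      obtain ⟨a, ha, hae⟩ := ht'
      have hex : ∃ a', j a' = F (j '' (t : Set o₁.ToType)) := ⟨a, hae⟩
      have hg : g (t : Set o₁.ToType) = a := by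
        rw [hgdef]
        simp only []
        rw [dif_pos hex]
        exact hj (hex.choose_spec.trans hae.symm)
      show g (t : Set o₁.ToType) ∈ (t : Set o₁.ToType)
      rw [hg]; exact ha
    obtain ⟨x, hx⟩ := hUn g hgin
    refine ⟨j x, ?_⟩
    rw [Ultrafilter.mem_map]
    refine Filter.mem_of_superset (Filter.inter_mem hF hx) ?_
    rintro t ⟨ht1, ht2⟩
    have ht1' : F (j '' (t : Set o₁.ToType)) ∈ j '' (t : Set o₁.ToType) := ht1
    obtain ⟨a, -, hae⟩ := ht1'
    have hex : ∃ a', j a' = F (j '' (t : Set o₁.ToType)) := ⟨a, hae⟩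
    have hg : g (t : Set o₁.ToType) = hex.choose := dif_pos hex
    have ht2' : g (t : Set o₁.ToType) = x := ht2
    show F (j '' (t : Set o₁.ToType)) = j x
    rw [← hex.choose_spec, ← hg, ht2']

theorem sc_transfer {κ : Cardinal.{0}} {o₁ o₂ : Ordinal.{0}} (e : o₁.ToType ≃ o₂.ToType) :
    IsSupercompact κ o₁ → IsSupercompact κ o₂ := by
  rintro ⟨U, hUc, hUf, hUn⟩
  obtain ⟨V, hVc, -, hVf, hVn⟩ := push_master e e.injective U hUc hUf hUn
  exact ⟨V, hVc, fun x => hVf x ⟨e.symm x, e.apply_symm_apply x⟩, hVn⟩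


/-- If `λ > κ` is a measurable cardinal and `κ` is `<λ`-supercompact (that is,
`μ`-supercompact for every cardinal `μ` with `κ ≤ μ < λ`), then `κ` is
`λ`-supercompact. -/
theorem supercompact_up_to_measurable (κ lam : Cardinal.{0}) (hlt : κ < lam)
    (hmeas : IsMeasurableCard lam)
    (hsc : ∀ μ : Cardinal.{0}, κ ≤ μ → μ < lam → IsSupercompact κ μ.ord) :
    IsSupercompact κ lam.ord := by
  classical
  obtain ⟨hℵ, W, hWc, hWnp⟩ := hmeas
  -- complements of small sets are in W
  have hsmall : ∀ S : Set lam.ord.ToType, #S < lam → Sᶜ ∈ W := by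
    intro S hS
    have h2 := hWc S (fun x => {(x : lam.ord.ToType)}ᶜ) hS
      (fun x => Ultrafilter.compl_mem_iff_notMem.2 (hWnp x))
    have h3 : (⋂ x : S, ({(x : lam.ord.ToType)}ᶜ : Set lam.ord.ToType)) = Sᶜ := by
      ext y
      simp only [mem_iInter, mem_compl_iff, mem_singleton_iff]
      constructor
      · intro h hy; exact h ⟨y, hy⟩ rfl
      · rintro h ⟨x, hx⟩ rfl; exact h hx
    rwa [h3] at h2
  have hIic : ∀ x : lam.ord.ToType, #(Iic x) < lam := by
    intro x
    rw [← Set.Iio_insert]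
    have h3 : #(Iio x) < lam := Cardinal.mk_Iio_ord_toType x
    refine lt_of_le_of_lt Cardinal.mk_insert_le ?_
    rcases lt_or_ge #(Iio x) ℵ₀ with h | h
    · exact (Cardinal.add_lt_aleph0 h Cardinal.one_lt_aleph0).trans hℵ
    · rwa [Cardinal.add_one_eq h]
  have htail : ∀ x : lam.ord.ToType, {y | x < y} ∈ W := by
    intro x
    have h : ({y | x < y} : Set lam.ord.ToType) = (Iic x)ᶜ := by
      ext y; simp [not_le]
    rw [h]
    exact hsmall _ (hIic x)
  -- a well founded relation on functions
  haveI hirr : IsIrrefl (lam.ord.ToType → lam.ord.ToType)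
      (fun g h => {α | g α < h α} ∈ W) := by
    constructor
    intro g hg
    have h0 : ({α | g α < g α} : Set lam.ord.ToType) = ∅ := by
      ext α; simp
    rw [h0] at hg
    exact Ultrafilter.empty_notMem hg
  haveI htr : IsTrans (lam.ord.ToType → lam.ord.ToType)
      (fun g h => {α | g α < h α} ∈ W) := by
    constructor
    intro a b c hab hbc
    refine Filter.mem_of_superset (Filter.inter_mem hab hbc) fun α hα => ?_
    have h1 : a α < b α := hα.1
    have h2 : b α < c α := hα.2
    show a α < c α
    exact lt_trans h1 h2
  haveI : IsStrictOrder (lam.ord.ToType → lam.ord.ToType)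
      (fun g h => {α | g α < h α} ∈ W) := {}
  have hwf : WellFounded (fun g h : lam.ord.ToType → lam.ord.ToType =>
      {α | g α < h α} ∈ W) := by
    rw [RelEmbedding.wellFounded_iff_isEmpty]
    constructor
    intro e
    have hmem : ∀ n : ℕ, {α | e (n + 1) α < e n α} ∈ W := fun n =>
      e.map_rel_iff.2 (Nat.lt_succ_self n)
    have h2 : (⋂ n : ℕ, {α | e (n + 1) α < e n α}) ∈ W :=
      hWc ℕ _ (by rw [Cardinal.mk_nat]; exact hℵ) hmem
    obtain ⟨α, hα⟩ := Ultrafilter.nonempty_of_mem h2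
    simp only [mem_iInter, mem_setOf_eq] at hα
    have hwfL : WellFounded ((· < ·) : lam.ord.ToType → lam.ord.ToType → Prop) :=
      IsWellFounded.wf
    exact (RelEmbedding.wellFounded_iff_isEmpty.1 hwfL).false
      (RelEmbedding.natGT (fun n => e n α) hα)
  obtain ⟨f, hfP, hfmin⟩ := hwf.has_min
    {g : lam.ord.ToType → lam.ord.ToType | ∀ γ, {α | γ < g α} ∈ W}
    ⟨id, fun γ => htail γ⟩
  -- the derived normal ultrafilter D = map f W
  have hDc : IsKComplete lam (W.map f) := by
    intro ι A hι hA
    rw [Ultrafilter.mem_map, Set.preimage_iInter]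
    exact hWc ι _ hι fun i => Ultrafilter.mem_map.1 (hA i)
  have hDtail : ∀ x : lam.ord.ToType, {y | x < y} ∈ W.map f := fun x =>
    Ultrafilter.mem_map.2 (hfP x)
  have hDreg : ∀ g : lam.ord.ToType → lam.ord.ToType,
      {β | g β < β} ∈ W.map f → ∃ x, {β | g β = x} ∈ W.map f := by
    intro g hg
    have h1 : {α | g (f α) < f α} ∈ W := Ultrafilter.mem_map.1 hg
    have h2 : ¬ ∀ γ, {α | γ < g (f α)} ∈ W := fun hP => hfmin (g ∘ f) hP h1
    push_neg at h2
    obtain ⟨γ, hγ⟩ := h2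
    have h3 : {α | g (f α) ≤ γ} ∈ W := by
      have h4 := Ultrafilter.compl_mem_iff_notMem.2 hγ
      have h5 : ({α | γ < g (f α)}ᶜ : Set lam.ord.ToType) = {α | g (f α) ≤ γ} := by
        ext α; simp [not_lt]
      rwa [h5] at h4
    by_contra hno
    push_neg at hno
    have h4 : ∀ y : Iic γ, ({α | g (f α) = (y : lam.ord.ToType)}ᶜ :
        Set lam.ord.ToType) ∈ W := fun y =>
      Ultrafilter.compl_mem_iff_notMem.2
        (fun hmem => hno (y : lam.ord.ToType) (Ultrafilter.mem_map.2 hmem))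
    have h5 := hWc (Iic γ) _ (hIic γ) h4
    obtain ⟨α, hα1, hα2⟩ := Ultrafilter.nonempty_of_mem (Filter.inter_mem h5 h3)
    simp only [mem_iInter, mem_compl_iff, mem_setOf_eq] at hα1
    exact hα1 ⟨g (f α), hα2⟩ rfl
  -- supercompactness at every ordinal below lam.ord
  have hSC : ∀ o : Ordinal.{0}, o < lam.ord → IsSupercompact κ o := by
    intro o ho
    by_cases hcase : o.card < κ
    · have huniv : (univ : Set o.ToType) ∈ Pfam κ o := by
        show #(univ : Set o.ToType) < κ
        rw [Cardinal.mk_univ, Cardinal.mk_toType]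
        exact hcase
      refine ⟨pure ⟨univ, huniv⟩, ?_, ?_, ?_⟩
      · intro ι A hι hA
        rw [Ultrafilter.mem_pure]
        exact mem_iInter.2 fun i => Ultrafilter.mem_pure.1 (hA i)
      · intro x
        exact Ultrafilter.mem_pure.2 (mem_univ x)
      · intro F _
        exact ⟨F univ, Ultrafilter.mem_pure.2 rfl⟩
    · push_neg at hcase
      have hμ := hsc o.card hcase (Cardinal.lt_ord.1 ho)
      have hcard : #((o.card).ord.ToType) = #(o.ToType) := by
        rw [Cardinal.mk_toType, Cardinal.mk_toType, Cardinal.card_ord]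
      obtain ⟨e⟩ := Cardinal.eq.1 hcard
      exact sc_transfer e hμ
  -- measures V β concentrated below β
  have hVex : ∀ β : lam.ord.ToType, ∃ V : Ultrafilter (Pfam κ lam.ord), IsKComplete κ V ∧
      {s : Pfam κ lam.ord | (s : Set lam.ord.ToType) ⊆ Iio β} ∈ V ∧
      (∀ b : lam.ord.ToType, b < β →
        {s : Pfam κ lam.ord | b ∈ (s : Set lam.ord.ToType)} ∈ V) ∧
      IsNormalUF κ lam.ord V := by
    intro β
    obtain ⟨U, hUc, hUf, hUn⟩ := hSC (ordOf β) (Ordinal.typein_lt_self β)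
    have hcard : #((ordOf β).ToType) = #(↥(Iio β)) := by
      rw [Cardinal.mk_toType]
      exact (@Ordinal.card_typein lam.ord.ToType (· < ·) isWellOrder_lt β).symm
    obtain ⟨e⟩ := Cardinal.eq.1 hcard
    have hjinj : Function.Injective (fun a => ((e a : ↥(Iio β)) : lam.ord.ToType)) :=
      fun a b hab => e.injective (Subtype.val_injective hab)
    have hrange : Set.range (fun a => ((e a : ↥(Iio β)) : lam.ord.ToType)) = Iio β := by
      ext y
      constructor
      · rintro ⟨a, rfl⟩
        exact (e a).2
      · intro hy
        exact ⟨e.symm ⟨y, hy⟩, by simp⟩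
    obtain ⟨V, hVc, hVconc, hVf, hVn⟩ := push_master _ hjinj U hUc hUf hUn
    rw [hrange] at hVconc hVf
    exact ⟨V, hVc, hVconc, hVf, hVn⟩
  choose V hVc hVconc hVf hVn using hVex
  have hbind : ∀ X : Set (Pfam κ lam.ord),
      (X ∈ (W.map f).bind V ↔ {β | X ∈ V β} ∈ W.map f) :=
    fun X => Iff.rfl
  -- the limit ultrafilter
  refine ⟨(W.map f).bind V, ?_, ?_, ?_⟩
  · intro ι A hι hA
    rw [hbind]
    have h1 : (⋂ i, {β | A i ∈ V β}) ∈ W.map f :=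
      hDc ι _ (hι.trans hlt) fun i => (hbind _).1 (hA i)
    refine Filter.mem_of_superset h1 fun β hβ => ?_
    simp only [mem_iInter, mem_setOf_eq] at hβ ⊢
    exact hVc β ι A hι hβ
  · intro x
    rw [hbind]
    exact Filter.mem_of_superset (hDtail x) fun β hβ => hVf β x hβ
  · intro F hF
    rw [hbind] at hF
    -- hF : {β | {s | F ↑s ∈ ↑s} ∈ V β} ∈ W.map f
    have hx : ∀ β : lam.ord.ToType, ∃ x : lam.ord.ToType,
        {s : Pfam κ lam.ord | F (s : Set lam.ord.ToType) ∈ (s : Set lam.ord.ToType)} ∈ V β →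
        x < β ∧ {s : Pfam κ lam.ord | F (s : Set lam.ord.ToType) = x} ∈ V β := by
      intro β
      by_cases hβ : {s : Pfam κ lam.ord |
          F (s : Set lam.ord.ToType) ∈ (s : Set lam.ord.ToType)} ∈ V β
      · obtain ⟨x, hxV⟩ := hVn β F hβ
        refine ⟨x, fun _ => ⟨?_, hxV⟩⟩
        obtain ⟨s, hs1, hs2, hs3⟩ := Ultrafilter.nonempty_of_mem
          (Filter.inter_mem hxV (Filter.inter_mem hβ (hVconc β)))
        exact hs3 (hs1 ▸ hs2)
      · exact ⟨β, fun hc => absurd hc hβ⟩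
    choose g hgspec using hx
    have h2 : {β | g β < β} ∈ W.map f :=
      Filter.mem_of_superset hF fun β hβ => (hgspec β hβ).1
    obtain ⟨x₀, hx₀⟩ := hDreg g h2
    refine ⟨x₀, ?_⟩
    rw [hbind]
    refine Filter.mem_of_superset (Filter.inter_mem hF hx₀) ?_
    rintro β ⟨hβ1, hβ2⟩
    have h3 := (hgspec β hβ1).2
    have hgx : g β = x₀ := hβ2
    rwa [hgx] at h3
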